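/- arXiv:2504.18913 — 4 statements merged into one kernel-verified Lean document; each statement's English description precedes it below -/
import Mathlib

section
/- Let A = Q Λ Qᵀ ∈ ℝ^{n×n} be symmetric, where Q is orthogonal and Λ = diag(λ₁,…,λₙ) satisfies λᵢ = −λ_{n+1−i} for all i (spectrum symmetric about 0). Let v⁽¹⁾ ∈ ℝⁿ be a unit vector such that μ⁽¹⁾ = Qᵀ v⁽¹⁾ is an absolute palindrome, i.e. |μ⁽¹⁾ᵢ| = |μ⁽¹⁾_{n+1−i}| for all 1 ≤ i ≤ ⌊n/2⌋. Suppose vectors v⁽¹⁾,…,v⁽ᵐ⁾ ∈ ℝⁿ and scalars α₁,…,α_m, β₁,…,β_{m−1} satisfy the Lanczos recurrence: α_k = (v⁽ᵏ⁾)ᵀ A v⁽ᵏ⁾, and β_k v⁽ᵏ⁺¹⁾ = A v⁽ᵏ⁾ − α_k v⁽ᵏ⁾ − β_{k−1} v⁽ᵏ⁻¹⁾ with β₀ = 0, v⁽⁰⁾ = 0, and β_k ≠ 0 for 1 ≤ k ≤ m−1. Then α_k = 0 for every k = 1,…,m; i.e. the Jacobi matrix produced by the m-step Lanczos iteration has constant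 zero diagonal. -/
open Matrix

/-- Lemma 3.2, full-rank case: if `A = Q Λ Qᵀ` with `Q` orthogonal and
spectrum symmetric about `0`, and the starting unit vector `v⁽¹⁾` has an absolute
palindrome `μ⁽¹⁾ = Qᵀ v⁽¹⁾`, then all diagonal entries `α_k` of the Jacobi matrix
produced by the `m`-step Lanczos iteration vanish. -/
theorem lanczos_zero_diagonal_of_absolute_palindrome
    {n : ℕ} (m : ℕ)
    (Q : Matrix (Fin n) (Fin n) ℝ) (hQ : Qᵀ * Q = 1)
    (lam : Fin n → ℝ) (hlam : ∀ i : Fin n, lam i.rev = -lam i)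
    (A : Matrix (Fin n) (Fin n) ℝ)
    (hA : A = Q * Matrix.diagonal lam * Qᵀ)
    (v : ℕ → Fin n → ℝ) (α β : ℕ → ℝ)
    (hv0 : v 0 = 0) (hβ0 : β 0 = 0)
    (hunit : v 1 ⬝ᵥ v 1 = 1)
    (hpal : ∀ i : Fin n, (i : ℕ) < n / 2 →
      |Qᵀ.mulVec (v 1) i| = |Qᵀ.mulVec (v 1) i.rev|)
    (hα : ∀ k, 1 ≤ k → k ≤ m → α k = v k ⬝ᵥ A.mulVec (v k))
    (hrec : ∀ k, 1 ≤ k → k ≤ m - 1 →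
      β k • v (k + 1) = A.mulVec (v k) - α k • v k - β (k - 1) • v (k - 1))
    (hβ : ∀ k, 1 ≤ k → k ≤ m - 1 → β k ≠ 0) :
    ∀ k, 1 ≤ k → k ≤ m → α k = 0 := by
  set μ : ℕ → Fin n → ℝ := fun k => Qᵀ.mulVec (v k) with hμdef
  -- Λ action in eigencoordinates
  have hΛ : ∀ w : Fin n → ℝ, Qᵀ.mulVec (A.mulVec w) = fun i => lam i * Qᵀ.mulVec w i := by
    intro w
    funext i
    rw [hA, Matrix.mulVec_mulVec, ← Matrix.mul_assoc, ← Matrix.mul_assoc, hQ, Matrix.one_mul,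
      ← Matrix.mulVec_mulVec, Matrix.mulVec_diagonal]
  have hμ0 : μ 0 = 0 := by simp [hμdef, hv0]
  -- α in eigencoordinates
  have hα' : ∀ k, 1 ≤ k → k ≤ m → α k = ∑ i, μ k i * (lam i * μ k i) := by
    intro k h1 h2
    rw [hα k h1 h2, hA, Matrix.mul_assoc, ← Matrix.mulVec_mulVec,
      Matrix.dotProduct_mulVec, ← Matrix.mulVec_transpose, ← Matrix.mulVec_mulVec]
    simp [dotProduct, Matrix.mulVec_diagonal, hμdef]
  -- recurrence in eigencoordinates
  have hrecμ : ∀ k, 1 ≤ k → k ≤ m - 1 → ∀ i,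
      β k * μ (k+1) i = lam i * μ k i - α k * μ k i - β (k-1) * μ (k-1) i := by
    intro k h1 h2 i
    have h : Qᵀ.mulVec (β k • v (k+1))
        = Qᵀ.mulVec (A.mulVec (v k) - α k • v k - β (k-1) • v (k-1)) := by
      rw [hrec k h1 h2]
    rw [Matrix.mulVec_smul, Matrix.mulVec_sub, Matrix.mulVec_sub, Matrix.mulVec_smul,
      Matrix.mulVec_smul, hΛ] at h
    have := congrFun h i
    simpa [hμdef] using this
  -- absolute palindrome for all indices
  have habs : ∀ i : Fin n, |μ 1 i| = |μ 1 i.rev| := by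
    intro i
    rcases lt_or_ge (i : ℕ) (n/2) with h | h
    · exact hpal i h
    · rcases lt_or_ge ((i.rev : ℕ)) (n/2) with h' | h'
      · have := hpal i.rev h'
        rw [Fin.rev_rev] at this
        exact this.symm
      · have hrevi : i.rev = i := by
          have hi := i.is_lt
          apply Fin.ext
          rw [Fin.val_rev]
          rw [Fin.val_rev] at h'
          omega
        rw [hrevi]
  have hsq : ∀ i : Fin n, μ 1 i * μ 1 i = μ 1 i.rev * μ 1 i.rev := by
    intro i
    rw [← abs_mul_abs_self (μ 1 i), ← abs_mul_abs_self (μ 1 i.rev), habs i]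
  -- the sign flip
  set D : Fin n → ℝ := fun i => if μ 1 i.rev = 0 then 1 else μ 1 i / μ 1 i.rev with hDdef
  have hDmu : ∀ i, D i * μ 1 i.rev = μ 1 i := by
    intro i
    by_cases hz : μ 1 i.rev = 0
    · have h0 : μ 1 i = 0 := abs_eq_zero.mp (by rw [habs i, hz, abs_zero])
      simp [hDdef, hz, h0]
    · simp only [hDdef, hz, if_false]
      field_simp
  have hD2 : ∀ i, D i * D i = 1 := by
    intro i
    by_cases hz : μ 1 i.rev = 0
    · simp [hDdef, hz]
    · simp only [hDdef, hz, if_false]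
      field_simp
      linarith [hsq i]
  have hDrev : ∀ i, D i.rev = D i := by
    intro i
    by_cases hz : μ 1 i.rev = 0
    · have h0 : μ 1 i = 0 := abs_eq_zero.mp (by rw [habs i, hz, abs_zero])
      simp [hDdef, hz, h0, Fin.rev_rev]
    · have hz' : μ 1 i ≠ 0 := by
        intro h0
        exact hz (abs_eq_zero.mp (by rw [← habs i, h0, abs_zero]))
      simp only [hDdef, Fin.rev_rev, hz, hz', if_false]
      field_simp
      linarith [hsq i]
  -- sum reindexing by rev
  have hswap : ∀ f : Fin n → ℝ, ∑ i : Fin n, f i = ∑ i : Fin n, f i.rev := by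
    intro f
    exact Fintype.sum_bijective Fin.rev Fin.rev_bijective f (fun i => f i.rev)
      (fun x => by simp [Fin.rev_rev])
  -- α vanishes whenever μ k is a signed palindrome
  have halz : ∀ k, 1 ≤ k → k ≤ m →
      (∀ i, D i * μ k i.rev = (-1:ℝ)^(k+1) * μ k i) → α k = 0 := by
    intro k h1 h2 hS
    have hs2 : ((-1:ℝ)^(k+1)) * ((-1:ℝ)^(k+1)) = 1 := by
      rw [← pow_add]
      exact Even.neg_one_pow ⟨k+1, by ring⟩
    have hrepr : ∀ i, μ k i = (-1:ℝ)^(k+1) * (D i * μ k i.rev) := by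
      intro i
      rw [hS i, ← mul_assoc, hs2, one_mul]
    have h1' : α k = ∑ i, lam i * μ k i.rev ^ 2 := by
      rw [hα' k h1 h2]
      apply Finset.sum_congr rfl
      intro i _
      calc μ k i * (lam i * μ k i)
          = ((-1:ℝ)^(k+1) * ((-1:ℝ)^(k+1))) * ((D i * D i) * (lam i * μ k i.rev ^ 2)) := by
            rw [hrepr i]; ring
        _ = lam i * μ k i.rev ^ 2 := by rw [hs2, hD2, one_mul, one_mul]
    have h2' : α k = ∑ i, lam i * μ k i ^ 2 := by
      rw [hα' k h1 h2]
      apply Finset.sum_congr rfl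
      intro i _
      ring
    have h3' : α k = -α k := by
      calc α k = ∑ i, lam i * μ k i.rev ^ 2 := h1'
        _ = ∑ i : Fin n, lam i.rev * μ k i.rev.rev ^ 2 := hswap _
        _ = ∑ i : Fin n, -(lam i * μ k i ^ 2) := by
            apply Finset.sum_congr rfl
            intro i _
            rw [Fin.rev_rev, hlam i]
            ring
        _ = -α k := by rw [Finset.sum_neg_distrib, h2']
    linarith
  -- the key induction
  have Skey : ∀ k, k ≤ m → ∀ i, D i * μ k i.rev = (-1:ℝ)^(k+1) * μ k i := by
    intro k
    induction k using Nat.strong_induction_on with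
    | _ k ih =>
      match k with
      | 0 =>
        intro _ i
        simp [hμ0]
      | 1 =>
        intro _ i
        rw [hDmu i]
        norm_num
      | (k+2) =>
        intro hk i
        have hS1 := ih (k+1) (by omega) (by omega)
        have hS0 := ih k (by omega) (by omega)
        have hα1 : α (k+1) = 0 := halz (k+1) (by omega) (by omega) hS1
        have hβne := hβ (k+1) (by omega) (by omega)
        have hr := hrecμ (k+1) (by omega) (by omega)
        have hri := hr i.rev
        have hri' := hr i
        rw [hα1] at hri hri'
        simp only [Nat.add_sub_cancel] at hri hri'
        have key : β (k+1) * (D i * μ (k+2) i.rev)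
            = β (k+1) * ((-1:ℝ)^(k+2+1) * μ (k+2) i) := by
          linear_combination (D i) * hri - ((-1:ℝ)^(k+2+1)) * hri'
            + (lam i.rev) * hS1 i - (β k) * hS0 i
            + ((-1:ℝ)^(k+1+1) * μ (k+1) i) * hlam i
        exact mul_left_cancel₀ hβne key
  intro k h1 h2
  exact halz k h1 h2 (Skey k h2)
end

section
/- Let A = Q Λ Qᵀ ∈ ℝ^{n×n} be symmetric of rank r, where Q is orthogonal and Λ = diag(λ₁,…,λₙ) has nondecreasing diagonal entries satisfying λᵢ = −λ_{n+1−i} for all i, and λᵢ = 0 exactly for r/2 < i ≤ n − r/2 (r even). Let v⁽¹⁾ ∈ ℝⁿ be a unit vector such that μ⁽¹⁾ = Qᵀ v⁽¹⁾ is an r-partial absolute palindrome, i.e. |μ⁽¹⁾ᵢ| = |μ⁽¹⁾_{n+1−i}| for all 1 ≤ i ≤ r/2. Suppose vectors v⁽¹⁾,…,v⁽ᵐ⁾ ∈ ℝⁿ and scalars α_k, β_k satisfy the Lanczos recurrence: α_k = (v⁽ᵏ⁾)ᵀ A v⁽ᵏ⁾, and β_k v⁽ᵏ⁺¹⁾ =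 A v⁽ᵏ⁾ − α_k v⁽ᵏ⁾ − β_{k−1} v⁽ᵏ⁻¹⁾ with β₀ = 0, v⁽⁰⁾ = 0, and β_k ≠ 0 for 1 ≤ k ≤ m−1. Then α_k = 0 for every k = 1,…,m. -/
open Matrix

lemma aux_sum_pair_zero {n r : ℕ} (lam w : Fin n → ℝ)
    (hlam : ∀ i : Fin n, lam i.rev = -lam i)
    (hzero : ∀ i : Fin n, lam i = 0 ↔ (r / 2 ≤ (i : ℕ) ∧ (i : ℕ) < n - r / 2))
    (hsq : ∀ i : Fin n, (i : ℕ) < r / 2 → w i.rev * w i.rev = w i * w i) :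
    ∑ i, lam i * (w i * w i) = 0 := by
  have hrev : ∑ i, lam i * (w i * w i)
      = ∑ i : Fin n, lam (Fin.rev i) * (w (Fin.rev i) * w (Fin.rev i)) := by
    exact (Fintype.sum_equiv (Fin.revPerm) _ _ (fun i => rfl)).symm
  have h2 : (2 : ℝ) * ∑ i, lam i * (w i * w i)
      = ∑ i : Fin n, (lam i * (w i * w i) + lam (Fin.rev i) * (w (Fin.rev i) * w (Fin.rev i))) := by
    rw [Finset.sum_add_distrib, ← hrev]; ring
  have hterm : ∀ i : Fin n,
      lam i * (w i * w i) + lam (Fin.rev i) * (w (Fin.rev i) * w (Fin.rev i)) = 0 := by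
    intro i
    rcases lt_or_ge (i : ℕ) (r / 2) with hi | hi
    · rw [hlam i, hsq i hi]; ring
    · rcases lt_or_ge (i : ℕ) (n - r / 2) with hi2 | hi2
      · have h1 : lam i = 0 := (hzero i).mpr ⟨hi, hi2⟩
        have h2 : lam (Fin.rev i) = 0 := by rw [hlam i, h1, neg_zero]
        rw [h1, h2]; ring
      · have hir : ((Fin.rev i : Fin n) : ℕ) < r / 2 := by
          have := i.isLt
          rw [Fin.val_rev]
          omega
        have := hsq (Fin.rev i) hir
        rw [Fin.rev_rev] at this
        rw [hlam i, this]; ring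
    
  have : (2 : ℝ) * ∑ i, lam i * (w i * w i) = 0 := by
    rw [h2]; exact Finset.sum_eq_zero (fun i _ => hterm i)
  linarith

lemma aux_sign_sq (t : ℕ) (e x y : ℝ) (he : e = 1 ∨ e = -1)
    (h : y = (-1 : ℝ) ^ t * e * x) : y * y = x * x := by
  have ht : (-1 : ℝ) ^ t * (-1 : ℝ) ^ t = 1 := by
    rw [← pow_add]; exact Even.neg_one_pow ⟨t, rfl⟩
  rcases he with h' | h' <;> subst h' <;> rw [h] <;> linear_combination (x * x) * ht

/-- Lemma 3.2, rank-deficient case: `A = Q Λ Qᵀ` symmetric of rank `r`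
(`r` even), `Λ` nondecreasing with symmetric spectrum whose zero eigenvalues occupy
exactly the middle `n - r` positions, and `μ⁽¹⁾ = Qᵀ v⁽¹⁾` an `r`-partial absolute
palindrome; then all Lanczos diagonal entries `α_k` vanish. -/
theorem lanczos_zero_diagonal_of_partial_palindrome
    {n : ℕ} (m r : ℕ) (hr : Even r) (hrn : r ≤ n)
    (Q : Matrix (Fin n) (Fin n) ℝ) (hQ : Qᵀ * Q = 1)
    (lam : Fin n → ℝ)
    (hmono : Monotone lam)
    (hlam : ∀ i : Fin n, lam i.rev = -lam i)
    (hzero : ∀ i : Fin n, lam i = 0 ↔ (r / 2 ≤ (i : ℕ) ∧ (i : ℕ) < n - r / 2))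
    (A : Matrix (Fin n) (Fin n) ℝ)
    (hA : A = Q * Matrix.diagonal lam * Qᵀ)
    (v : ℕ → Fin n → ℝ) (α β : ℕ → ℝ)
    (hv0 : v 0 = 0) (hβ0 : β 0 = 0)
    (hunit : v 1 ⬝ᵥ v 1 = 1)
    (hpal : ∀ i : Fin n, (i : ℕ) < r / 2 →
      |Qᵀ.mulVec (v 1) i| = |Qᵀ.mulVec (v 1) i.rev|)
    (hα : ∀ k, 1 ≤ k → k ≤ m → α k = v k ⬝ᵥ A.mulVec (v k))
    (hrec : ∀ k, 1 ≤ k → k ≤ m - 1 →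
      β k • v (k + 1) = A.mulVec (v k) - α k • v k - β (k - 1) • v (k - 1))
    (hβ : ∀ k, 1 ≤ k → k ≤ m - 1 → β k ≠ 0) :
    ∀ k, 1 ≤ k → k ≤ m → α k = 0 := by
  classical
  set μ : ℕ → Fin n → ℝ := fun k => Qᵀ.mulVec (v k) with hμdef
  -- sign choice
  set ε : Fin n → ℝ := fun i => if μ 1 i.rev = μ 1 i then 1 else -1 with hεdef
  have hεbase : ∀ i : Fin n, (i : ℕ) < r / 2 → μ 1 i.rev = ε i * μ 1 i := by
    intro i hi
    rcases abs_eq_abs.mp (hpal i hi).symm with h | h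
    · have h' : μ 1 i.rev = μ 1 i := h
      simp only [hεdef, if_pos h', one_mul]; exact h'
    · have h' : μ 1 i.rev = -μ 1 i := h
      by_cases hc : μ 1 i.rev = μ 1 i
      · simp only [hεdef, if_pos hc, one_mul]; exact hc
      · simp only [hεdef, if_neg hc]; rw [h']; ring
  have hεpm : ∀ i : Fin n, ε i = 1 ∨ ε i = -1 := by
    intro i
    by_cases hc : μ 1 i.rev = μ 1 i <;> simp [hεdef, hc]
  -- Q^T A = Λ Q^T action
  have hQA : ∀ x : Fin n → ℝ, ∀ i : Fin n,
      Qᵀ.mulVec (A.mulVec x) i = lam i * Qᵀ.mulVec x i := by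
    intro x i
    rw [hA, mulVec_mulVec, show Qᵀ * (Q * Matrix.diagonal lam * Qᵀ)
        = Matrix.diagonal lam * Qᵀ by
      rw [← Matrix.mul_assoc, ← Matrix.mul_assoc, hQ, Matrix.one_mul],
      ← mulVec_mulVec, mulVec_diagonal]
  -- α as a sum
  have hαsum : ∀ k, 1 ≤ k → k ≤ m → α k = ∑ i, lam i * (μ k i * μ k i) := by
    intro k hk1 hkm
    rw [hα k hk1 hkm, hA, ← mulVec_mulVec, ← mulVec_mulVec,
      dotProduct_mulVec, ← mulVec_transpose]
    simp only [dotProduct, mulVec_diagonal, hμdef]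
    exact Finset.sum_congr rfl (fun i _ => by ring)
  -- componentwise recurrence in eigenbasis
  have hcomp : ∀ k, 1 ≤ k → k ≤ m - 1 → ∀ i : Fin n,
      β k * μ (k + 1) i = lam i * μ k i - α k * μ k i - β (k - 1) * μ (k - 1) i := by
    intro k hk1 hkm i
    have h := congrArg (fun x => Qᵀ.mulVec x i) (hrec k hk1 hkm)
    simp only [mulVec_smul, mulVec_sub, Pi.sub_apply, Pi.smul_apply, smul_eq_mul] at h
    rw [h, hQA (v k) i]
  -- main induction: sign palindrome property
  have key : ∀ k, k ≤ m → ∀ i : Fin n, (i : ℕ) < r / 2 →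
      μ k i.rev = (-1 : ℝ) ^ (k - 1) * ε i * μ k i := by
    intro k
    induction k using Nat.strong_induction_on with
    | _ k IH =>
      match k with
      | 0 =>
        intro _ i _
        simp only [hμdef, hv0, mulVec_zero, Pi.zero_apply, mul_zero]
      | 1 =>
        intro _ i hi
        simpa using hεbase i hi
      | (j + 2) =>
        intro hm i hi
        have hj1m : j + 1 ≤ m - 1 := by omega
        have hj1m' : j + 1 ≤ m := by omega
        have hjm : j ≤ m := by omega
        have hP1 := IH (j + 1) (by omega) hj1m'
        -- α (j+1) = 0
        have hα0 : α (j + 1) = 0 := by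
          rw [hαsum (j + 1) (by omega) hj1m']
          apply aux_sum_pair_zero lam (μ (j + 1)) hlam hzero
          intro i' hi'
          exact aux_sign_sq (j + 1 - 1) (ε i') _ _ (hεpm i') (hP1 i' hi')
        -- β j * μ j rev relation (handles j = 0)
        have hjrev : β j * μ j i.rev = -(-1 : ℝ) ^ j * ε i * (β j * μ j i) := by
          match j with
          | 0 => rw [hβ0]; ring
          | (t + 1) =>
            have := IH (t + 1) (by omega) (by omega) i hi
            rw [this]
            have : (-1 : ℝ) ^ (t + 1 - 1) = -(-1 : ℝ) ^ (t + 1) := by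
              simp [pow_succ]
            rw [this]; ring
        have hβne := hβ (j + 1) (by omega) hj1m
        apply mul_left_cancel₀ hβne
        have E1 := hcomp (j + 1) (by omega) hj1m i.rev
        have E2 := hcomp (j + 1) (by omega) hj1m i
        simp only [Nat.add_sub_cancel] at E1 E2
        simp only [Nat.add_sub_cancel] at hP1
        rw [hα0] at E1 E2
        rw [E1, hlam i, hP1 i hi]
        have hexp : (-1 : ℝ) ^ (j + 2 - 1) = -(-1 : ℝ) ^ j := by
          simp [pow_succ]
        rw [hexp]
        linear_combination ((-1 : ℝ) ^ j * ε i) * E2 - hjrev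
  -- conclude
  intro k hk1 hkm
  rw [hαsum k hk1 hkm]
  apply aux_sum_pair_zero lam (μ k) hlam hzero
  intro i hi
  exact aux_sign_sq (k - 1) (ε i) _ _ (hεpm i) (key k hkm i hi)
end

section
/- Let T ∈ ℝ^{m×m} be a symmetric tridiagonal matrix with zero diagonal (T_{ij} = 0 whenever |i−j| ≠ 1), and let D = diag((−1)¹, (−1)², …, (−1)^m). Then D T D = −T. Consequently, if T ψ = θ ψ for some θ ∈ ℝ and ψ ∈ ℝ^m, then T (D ψ) = −θ (D ψ), and the first components satisfy ((Dψ)₁)² = (ψ₁)². In particular the eigenvalues of T are symmetric about 0, and the squared first entries of normalized eigenvectors (the Gauss quadrature weights) corresponding to a pair of eigenvalues θ and −θ are equal. -/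
open Matrix

lemma neg_one_pow_odd_aux (n : ℕ) : (-1 : ℝ) ^ (2 * n + 1) = -1 := by
  rw [pow_succ, pow_mul]; norm_num

/-- core of Theorem 3.4: for a symmetric tridiagonal `T` with zero
diagonal and `D = diag((-1)¹, …, (-1)^m)` one has `D T D = -T`; eigenpairs `(θ, ψ)`
give eigenpairs `(-θ, D ψ)` with the same squared first entry, so the Gauss
quadrature nodes are symmetric with equal weights on symmetric pairs. -/
theorem zero_diag_jacobi_symmetric_nodes_equal_weights
    {m : ℕ} (hm : 0 < m)
    (T : Matrix (Fin m) (Fin m) ℝ)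
    (hsymm : Tᵀ = T)
    (htri : ∀ i j : Fin m, ¬((i : ℕ) = (j : ℕ) + 1 ∨ (j : ℕ) = (i : ℕ) + 1) → T i j = 0)
    (D : Matrix (Fin m) (Fin m) ℝ)
    (hD : D = Matrix.diagonal fun i : Fin m => (-1 : ℝ) ^ ((i : ℕ) + 1)) :
    D * T * D = -T ∧
    ∀ (θ : ℝ) (ψ : Fin m → ℝ), T.mulVec ψ = θ • ψ →
      T.mulVec (D.mulVec ψ) = (-θ) • D.mulVec ψ ∧
      (D.mulVec ψ ⟨0, hm⟩) ^ 2 = (ψ ⟨0, hm⟩) ^ 2 := by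
  have hDTD : D * T * D = -T := by
    subst hD
    ext i j
    simp only [Matrix.diagonal_mul, Matrix.mul_diagonal, Matrix.neg_apply]
    by_cases h : (i : ℕ) = (j : ℕ) + 1 ∨ (j : ℕ) = (i : ℕ) + 1
    · have key : (-1 : ℝ) ^ ((i : ℕ) + 1) * ((-1 : ℝ) ^ ((j : ℕ) + 1)) = -1 := by
        rw [← pow_add]
        rcases h with h | h
        · rw [h]
          have e : (j : ℕ) + 1 + 1 + ((j : ℕ) + 1) = 2 * ((j : ℕ) + 1) + 1 := by ring
          rw [e, neg_one_pow_odd_aux]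
        · rw [h]
          have e : (i : ℕ) + 1 + ((i : ℕ) + 1 + 1) = 2 * ((i : ℕ) + 1) + 1 := by ring
          rw [e, neg_one_pow_odd_aux]
      rw [mul_comm ((-1:ℝ) ^ ((i : ℕ) + 1)) (T i j), mul_assoc, key]
      ring
    · rw [htri i j h]; ring
  have hsq : ∀ i : Fin m, (-1 : ℝ) ^ ((i : ℕ) + 1) * (-1 : ℝ) ^ ((i : ℕ) + 1) = 1 := by
    intro i
    rw [← pow_add, ← two_mul, pow_mul]
    norm_num
  have hDD : D * D = 1 := by
    subst hD
    rw [Matrix.diagonal_mul_diagonal]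
    simp only [hsq]
    exact Matrix.diagonal_one
  refine ⟨hDTD, fun θ ψ hψ => ⟨?_, ?_⟩⟩
  · have hTD : T * D = -(D * T) := by
      have h2 := congrArg (fun M => D * M) hDTD
      simp only [← mul_assoc, hDD, one_mul] at h2
      rw [h2, Matrix.mul_neg]
    calc T.mulVec (D.mulVec ψ) = (T * D).mulVec ψ := by rw [Matrix.mulVec_mulVec]
      _ = -(D.mulVec (T.mulVec ψ)) := by rw [hTD, Matrix.neg_mulVec, Matrix.mulVec_mulVec]
      _ = (-θ) • D.mulVec ψ := by
          rw [hψ, Matrix.mulVec_smul]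
          ext i; simp
  · subst hD
    rw [Matrix.mulVec_diagonal]
    ring
end

section
/- Let B ∈ ℝ^{n×n} be square and let A = [[0, B],[Bᵀ, 0]] ∈ ℝ^{2n×2n} be the associated Jordan–Wielandt matrix. For z ∈ {−1, +1}ⁿ let z̃ = [z; 0] ∈ ℝ^{2n} (the upper partial Rademacher vector). Then the average over all 2ⁿ sign vectors satisfies 2 · (1/2ⁿ) Σ_{z ∈ {−1,+1}ⁿ} z̃ᵀ exp(A) z̃ = tr(exp(A)); i.e. the estimator tr(exp(A))† = (2/N) Σ_{k=1}^N z̃_kᵀ exp(A) z̃_k with i.i.d. uniformly distributed partial Rademacher vectors z̃_k is an unbiased estimator of tr(exp(A)). The same identity holds for the lower partial Rademacher vectors z̃ = [0; z]. -/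
/-!
Averaging `z_i z_j` over all sign vectors gives `δ_ij`, so the average of `[z; 0]ᵀ M [z; 0]`
is the trace of the upper-left block of `M`, and that of `[0; z]ᵀ M [0; z]` the trace of the
lower-right block. For `M = exp A` these two traces agree: the even powers of `A` are
`diag ((B Bᵀ)ᵏ, (Bᵀ B)ᵏ)`, whose blocks have equal traces by cyclicity, the odd powers have zero
diagonal blocks, and equality of the two block traces is a closed linear condition, so it passes
to the exponential series. Hence each block carries half of `tr (exp A)`.
-/

open Matrix

/-- The `±1` sign vector encoded by a Boolean vector. -/
def radVec {n : ℕ} (s : Fin n → Bool) : Fin n → ℝ :=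
  fun i => if s i then 1 else -1

section Rademacher

variable {n : ℕ}

lemma radVec_mul_self (s : Fin n → Bool) (i : Fin n) : radVec s i * radVec s i = 1 := by
  unfold radVec; split_ifs <;> norm_num

lemma involutive_update_not (i : Fin n) :
    Function.Involutive fun s : Fin n → Bool => Function.update s i (!s i) := by
  intro s; simp

lemma sum_radVec_mul_radVec (i j : Fin n) :
    ∑ s : Fin n → Bool, radVec s i * radVec s j = if i = j then 2 ^ n else 0 := by
  split_ifs with hij
  · subst hij
    simp [radVec_mul_self]
  · -- flipping the `i`-th sign negates every summand
    set σ := (involutive_update_not i).toPerm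
    have hflip : ∀ s, radVec (σ s) i * radVec (σ s) j = -(radVec s i * radVec s j) := by
      intro s
      simp only [σ, Function.Involutive.coe_toPerm, radVec, Function.update_self,
        Function.update_of_ne (Ne.symm hij)]
      cases s i <;> cases s j <;> norm_num
    have := Equiv.sum_comp σ fun s => radVec s i * radVec s j
    simp only [hflip, Finset.sum_neg_distrib] at this
    linarith

lemma sum_radVec_dotProduct_mulVec (M : Matrix (Fin n) (Fin n) ℝ) :
    ∑ s : Fin n → Bool, radVec s ⬝ᵥ M *ᵥ radVec s = 2 ^ n * M.trace := by
  calc ∑ s : Fin n → Bool, radVec s ⬝ᵥ M *ᵥ radVec s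
      = ∑ i, ∑ j, M i j * ∑ s : Fin n → Bool, radVec s i * radVec s j := by
        simp only [dotProduct, mulVec, Finset.mul_sum]
        rw [Finset.sum_comm]
        refine Finset.sum_congr rfl fun i _ => ?_
        rw [Finset.sum_comm]
        exact Finset.sum_congr rfl fun j _ => Finset.sum_congr rfl fun s _ => by ring
    _ = 2 ^ n * M.trace := by
        simp [sum_radVec_mul_radVec, trace, Finset.mul_sum, mul_comm]

end Rademacher

section Blocks

variable {m n R : Type*} [Fintype m] [Fintype n] [Semiring R]

lemma sum_elim_zero_dotProduct_mulVec (M : Matrix (m ⊕ n) (m ⊕ n) R) (v : m → R) :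
    Sum.elim v 0 ⬝ᵥ M *ᵥ Sum.elim v 0 = v ⬝ᵥ M.toBlocks₁₁ *ᵥ v := by
  rw [← fromBlocks_toBlocks M, fromBlocks_mulVec]
  simp [dotProduct, Fintype.sum_sum_type]

lemma zero_sum_elim_dotProduct_mulVec (M : Matrix (m ⊕ n) (m ⊕ n) R) (v : n → R) :
    Sum.elim 0 v ⬝ᵥ M *ᵥ Sum.elim 0 v = v ⬝ᵥ M.toBlocks₂₂ *ᵥ v := by
  rw [← fromBlocks_toBlocks M, fromBlocks_mulVec]
  simp [dotProduct, Fintype.sum_sum_type]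

lemma trace_eq_trace_toBlocks₁₁_add_trace_toBlocks₂₂ (M : Matrix (m ⊕ n) (m ⊕ n) R) :
    M.trace = M.toBlocks₁₁.trace + M.toBlocks₂₂.trace := by
  simp [trace, Fintype.sum_sum_type, toBlocks₁₁, toBlocks₂₂]

variable [DecidableEq m] [DecidableEq n]

lemma fromBlocks_zero_pow_two_mul (B : Matrix m n R) (C : Matrix n m R) (k : ℕ) :
    fromBlocks 0 B C 0 ^ (2 * k) = fromBlocks ((B * C) ^ k) 0 0 ((C * B) ^ k) := by
  induction k with
  | zero => simp [fromBlocks_one]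
  | succ k ih =>
    rw [Nat.mul_succ, pow_add, ih, pow_two, fromBlocks_multiply, fromBlocks_multiply]
    simp [pow_succ]

lemma fromBlocks_zero_pow_two_mul_add_one (B : Matrix m n R) (C : Matrix n m R) (k : ℕ) :
    fromBlocks 0 B C 0 ^ (2 * k + 1) = fromBlocks 0 ((B * C) ^ k * B) ((C * B) ^ k * C) 0 := by
  rw [pow_succ, fromBlocks_zero_pow_two_mul, fromBlocks_multiply]
  simp

end Blocks

lemma trace_mul_pow_comm {n R : Type*} [Fintype n] [DecidableEq n] [CommSemiring R]
    (B C : Matrix n n R) (k : ℕ) : ((B * C) ^ k).trace = ((C * B) ^ k).trace := by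
  cases k with
  | zero => rfl
  | succ k => rw [pow_succ, ← mul_assoc, mul_pow_mul, trace_mul_cycle, ← pow_succ']

theorem NormedSpace.exp_mem_of_forall_pow_mem {𝕂 𝔸 : Type*} [Field 𝕂] [CharZero 𝕂] [Ring 𝔸]
    [Algebra 𝕂 𝔸] [TopologicalSpace 𝔸] [IsTopologicalRing 𝔸] {S : Submodule 𝕂 𝔸}
    (hS : IsClosed (S : Set 𝔸)) {x : 𝔸} (hx : ∀ k : ℕ, x ^ k ∈ S) : NormedSpace.exp x ∈ S := by
  rw [NormedSpace.exp_eq_tsum 𝕂]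
  exact tsum_mem hS fun k => S.smul_mem _ (hx k)

section Balanced

variable {n R : Type*} [Fintype n] [CommSemiring R]

variable (n R) in
def balancedBlockTraces : Submodule R (Matrix (n ⊕ n) (n ⊕ n) R) where
  carrier := {M | M.toBlocks₁₁.trace = M.toBlocks₂₂.trace}
  add_mem' {M N} hM hN := by simp_all [trace, toBlocks₁₁, toBlocks₂₂, Finset.sum_add_distrib]
  zero_mem' := by simp [trace, toBlocks₁₁, toBlocks₂₂]
  smul_mem' c M hM := by simp_all [trace, toBlocks₁₁, toBlocks₂₂, ← Finset.mul_sum]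

lemma mem_balancedBlockTraces {M : Matrix (n ⊕ n) (n ⊕ n) R} :
    M ∈ balancedBlockTraces n R ↔ M.toBlocks₁₁.trace = M.toBlocks₂₂.trace := Iff.rfl

lemma isClosed_balancedBlockTraces [TopologicalSpace R] [ContinuousAdd R] [T2Space R] :
    IsClosed (balancedBlockTraces n R : Set (Matrix (n ⊕ n) (n ⊕ n) R)) :=
  isClosed_eq (by unfold trace toBlocks₁₁; fun_prop) (by unfold trace toBlocks₂₂; fun_prop)

variable [DecidableEq n]

lemma fromBlocks_zero_pow_mem_balancedBlockTraces (B C : Matrix n n R) (k : ℕ) :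
    fromBlocks 0 B C 0 ^ k ∈ balancedBlockTraces n R := by
  rw [mem_balancedBlockTraces]
  obtain ⟨j, rfl | rfl⟩ := Nat.even_or_odd' k
  · simp [fromBlocks_zero_pow_two_mul, trace_mul_pow_comm]
  · simp [fromBlocks_zero_pow_two_mul_add_one]

lemma exp_fromBlocks_zero_mem_balancedBlockTraces {𝕂 : Type*} [Field 𝕂] [CharZero 𝕂]
    [TopologicalSpace 𝕂] [IsTopologicalRing 𝕂] [T2Space 𝕂] (B C : Matrix n n 𝕂) :
    NormedSpace.exp (fromBlocks 0 B C 0) ∈ balancedBlockTraces n 𝕂 :=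
  NormedSpace.exp_mem_of_forall_pow_mem isClosed_balancedBlockTraces
    (fromBlocks_zero_pow_mem_balancedBlockTraces B C)

end Balanced

/-- unbiasedness, square case `n₁ = n₂ = n`: averaging the doubled
quadratic forms `z̃ᵀ exp(A) z̃` over all `2ⁿ` upper (resp. lower) partial
Rademacher vectors `z̃ = [z; 0]` (resp. `[0; z]`) recovers `tr(exp A)` exactly,
so the corresponding stochastic trace estimator is unbiased. -/
theorem partial_rademacher_unbiased_square
    {n : ℕ} (B : Matrix (Fin n) (Fin n) ℝ)
    (A : Matrix (Fin n ⊕ Fin n) (Fin n ⊕ Fin n) ℝ)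
    (hA : A = Matrix.fromBlocks 0 B Bᵀ 0) :
    2 * ((1 / 2 ^ n) * ∑ s : Fin n → Bool,
        Sum.elim (radVec s) 0 ⬝ᵥ (NormedSpace.exp A).mulVec (Sum.elim (radVec s) 0))
      = (NormedSpace.exp A).trace ∧
    2 * ((1 / 2 ^ n) * ∑ s : Fin n → Bool,
        Sum.elim 0 (radVec s) ⬝ᵥ (NormedSpace.exp A).mulVec (Sum.elim 0 (radVec s)))
      = (NormedSpace.exp A).trace := by
  have hbalanced : (NormedSpace.exp A).toBlocks₁₁.trace = (NormedSpace.exp A).toBlocks₂₂.trace :=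
    hA ▸ exp_fromBlocks_zero_mem_balancedBlockTraces B Bᵀ
  simp only [sum_elim_zero_dotProduct_mulVec, zero_sum_elim_dotProduct_mulVec,
    sum_radVec_dotProduct_mulVec,
    trace_eq_trace_toBlocks₁₁_add_trace_toBlocks₂₂ (NormedSpace.exp A), ← hbalanced]
  have h2n : (2 : ℝ) ^ n ≠ 0 := by positivity
  constructor <;> field_simp <;> ring
end
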